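/- In an affine plane of infinite order (or more generally any affine plane with at least two parallel lines in some pencil), the transposition of two distinct parallel lines (fixing all other lines) is an automorphism of the Plücker space of lines, but it is not induced by any collineation of the plane. -/

import Mathlib

variable (k V P : Type*) [DivisionRing k] [AddCommGroup V] [Module k V] [AddTorsor V P]

/-- A subset of the affine space `P` is a line iff it is of the form `{t • v +ᵥ p | t : k}`
with `v ≠ 0`. -/
def IsPLine (s : Set P) : Prop :=
  ∃ (p : P) (v : V), v ≠ 0 ∧ s = {q | ∃ t : k, q = t • v +ᵥ p}

/-- The set of all lines of the affine space `P`. -/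
abbrev PLine : Type _ := {s : Set P // IsPLine k V P s}

/-- Two lines are related iff they have a common point. -/
def PMeets (a b : PLine k V P) : Prop := (a.1 ∩ b.1).Nonempty

/-- Two lines are parallel iff one is a translate of the other. -/
def PPar (a b : PLine k V P) : Prop := ∃ v : V, b.1 = (fun q => v +ᵥ q) '' a.1

/-! In a plane, a line `x` other than `a` and `b` meets `a` iff it meets `b`: otherwise it is
parallel to one of them, hence to both, and so equals the one it meets. Hence swapping `a` and `b`
preserves the meeting relation. A point map `κ` inducing the swap would send a point `p` of `a`
into `b` and into every other line through `p`; two such lines meet only at `p`, so `κ p = p`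
lies on both `a` and `b`, which are disjoint. -/

open AffineSubspace Module
open scoped Affine

theorem Equiv.rel_iff_rel_swap_swap {α : Type*} [DecidableEq α] {R : α → α → Prop}
    (hrefl : ∀ x, R x x) (hsymm : ∀ x y, R x y → R y x) {a b : α}
    (htwin : ∀ x, x ≠ a → x ≠ b → (R x a ↔ R x b)) (x y : α) :
    R x y ↔ R (swap a b x) (swap a b y) := by
  simp only [swap_apply_def]
  split_ifs <;> subst_vars <;> grind

section

variable {k V P}

theorem span_singleton_ne_of_linearIndependent {x y : V} (h : LinearIndependent k ![x, y]) :
    k ∙ x ≠ k ∙ y := by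
  intro hxy
  obtain ⟨t, ht⟩ := Submodule.mem_span_singleton.1 (hxy ▸ Submodule.mem_span_singleton_self y)
  exact (LinearIndependent.pair_iff' (by simpa using h.ne_zero 0)).1 h t ht

theorem exists_linearIndependent_pairs_of_one_lt_finrank (h : 1 < finrank k V) {u : V}
    (hu : u ≠ 0) :
    ∃ w w' : V, LinearIndependent k ![u, w] ∧ LinearIndependent k ![u, w'] ∧
      LinearIndependent k ![w, w'] := by
  obtain ⟨w, hw⟩ := exists_linearIndependent_pair_of_one_lt_finrank h hu
  refine ⟨w, u + w, hw, LinearIndependent.pair_iff.2 fun s t hst => ?_,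
    LinearIndependent.pair_iff.2 fun s t hst => ?_⟩
  · obtain ⟨hs, ht⟩ := LinearIndependent.pair_iff.1 hw (s + t) t
      (by rw [← hst, add_smul, smul_add, add_assoc])
    exact ⟨by simpa [ht] using hs, ht⟩
  · obtain ⟨ht, hs⟩ := LinearIndependent.pair_iff.1 hw t (s + t)
      (by rw [← hst, add_smul, smul_add]; abel)
    exact ⟨by simpa [ht] using hs, ht⟩

namespace AffineSubspace

theorem coe_mk'_span_singleton (p : P) (v : V) :
    (mk' p (k ∙ v) : Set P) = {q | ∃ t : k, q = t • v +ᵥ p} := by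
  ext q
  simp [Submodule.mem_span_singleton, eq_vadd_iff_vsub_eq, eq_comm]

theorem parallel_or_inter_nonempty_of_finrank_direction_add_one [FiniteDimensional k V]
    {s₁ s₂ : AffineSubspace k P} (h₁ : (s₁ : Set P).Nonempty) (h₂ : (s₂ : Set P).Nonempty)
    (hd₁ : finrank k s₁.direction + 1 = finrank k V)
    (hd₂ : finrank k s₂.direction = finrank k s₁.direction) :
    s₁ ∥ s₂ ∨ ((s₁ : Set P) ∩ s₂).Nonempty := by
  by_cases hd : s₁.direction = s₂.direction
  · exact .inl <| parallel_iff_direction_eq_and_eq_bot_iff_eq_bot.2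
      ⟨hd, iff_of_false ((nonempty_iff_ne_bot _).1 h₁) ((nonempty_iff_ne_bot _).1 h₂)⟩
  · refine .inr <| inter_nonempty_of_nonempty_of_sup_direction_eq_top h₁ h₂ <|
      Submodule.eq_top_of_finrank_eq ?_
    have hlt : s₁.direction < s₁.direction ⊔ s₂.direction :=
      lt_of_le_of_ne le_sup_left fun h => hd (Submodule.eq_of_le_of_finrank_eq
        (h ▸ le_sup_right : s₂.direction ≤ s₁.direction) hd₂).symm
    have := Submodule.finrank_lt_finrank_of_lt hlt
    have := Submodule.finrank_le (s₁.direction ⊔ s₂.direction)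
    omega

theorem eq_of_mem_of_mem_of_finrank_direction_eq_one {s₁ s₂ : AffineSubspace k P} {p q : P}
    (h₁ : finrank k s₁.direction = 1) (h₂ : finrank k s₂.direction = 1) (hpq : p ≠ q)
    (hp₁ : p ∈ s₁) (hq₁ : q ∈ s₁) (hp₂ : p ∈ s₂) (hq₂ : q ∈ s₂) : s₁ = s₂ := by
  have hdir : ∀ s : AffineSubspace k P, finrank k s.direction = 1 → p ∈ s → q ∈ s →
      s.direction = k ∙ (q -ᵥ p) := fun s hs hp hq =>
    haveI := Module.finite_of_finrank_eq_succ hs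
    (Submodule.eq_of_le_of_finrank_eq
      ((Submodule.span_singleton_le_iff_mem _ _).2 (vsub_mem_direction hq hp))
      (by rw [finrank_span_singleton (vsub_ne_zero.2 hpq.symm), hs])).symm
  exact ext_of_direction_eq (by rw [hdir s₁ h₁ hp₁ hq₁, hdir s₂ h₂ hp₂ hq₂]) ⟨p, hp₁, hp₂⟩

end AffineSubspace

namespace PLine

def toAffineSubspace (l : PLine k V P) : AffineSubspace k P := affineSpan k l.1

theorem exists_eq_mk' (l : PLine k V P) :
    ∃ (p : P) (v : V), v ≠ 0 ∧ l.1 = (mk' p (k ∙ v) : Set P) := by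
  obtain ⟨p, v, hv, hl⟩ := l.2
  exact ⟨p, v, hv, hl.trans (coe_mk'_span_singleton p v).symm⟩

theorem nonempty (l : PLine k V P) : l.1.Nonempty := by
  obtain ⟨p, v, -, hl⟩ := exists_eq_mk' l
  exact ⟨p, hl ▸ self_mem_mk' p _⟩

theorem coe_toAffineSubspace (l : PLine k V P) : (toAffineSubspace l : Set P) = l.1 := by
  obtain ⟨p, v, -, hl⟩ := exists_eq_mk' l
  rw [toAffineSubspace, hl, affineSpan_coe]

theorem exists_direction_eq_span_singleton (l : PLine k V P) :
    ∃ v : V, v ≠ 0 ∧ (toAffineSubspace l).direction = k ∙ v := by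
  obtain ⟨p, v, hv, hl⟩ := exists_eq_mk' l
  exact ⟨v, hv, by rw [toAffineSubspace, hl, affineSpan_coe, direction_mk']⟩

theorem finrank_direction (l : PLine k V P) : finrank k (toAffineSubspace l).direction = 1 := by
  obtain ⟨v, hv, hl⟩ := exists_direction_eq_span_singleton l
  rw [hl, finrank_span_singleton hv]

theorem toAffineSubspace_injective : Function.Injective (toAffineSubspace : PLine k V P → _) :=
  fun x y h => Subtype.ext <| by rw [← coe_toAffineSubspace, h, coe_toAffineSubspace]

theorem pmeets_iff {x y : PLine k V P} :
    PMeets k V P x y ↔ ((toAffineSubspace x : Set P) ∩ toAffineSubspace y).Nonempty := by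
  rw [PMeets, coe_toAffineSubspace, coe_toAffineSubspace]

theorem ppar_iff {x y : PLine k V P} :
    PPar k V P x y ↔ toAffineSubspace x ∥ toAffineSubspace y := by
  simp only [PPar, Parallel, ← SetLike.coe_set_eq, coe_map, coe_toAffineSubspace]
  rfl

theorem pmeets_refl (x : PLine k V P) : PMeets k V P x x :=
  let ⟨p, hp⟩ := nonempty x
  ⟨p, hp, hp⟩

theorem _root_.PMeets.symm {x y : PLine k V P} (h : PMeets k V P x y) : PMeets k V P y x := by
  rwa [PMeets, Set.inter_comm]

theorem _root_.PPar.symm {x y : PLine k V P} (h : PPar k V P x y) : PPar k V P y x :=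
  ppar_iff.2 (ppar_iff.1 h).symm

theorem _root_.PPar.trans {x y z : PLine k V P} (hxy : PPar k V P x y) (hyz : PPar k V P y z) :
    PPar k V P x z :=
  ppar_iff.2 ((ppar_iff.1 hxy).trans (ppar_iff.1 hyz))

theorem _root_.PPar.eq_of_pmeets {x y : PLine k V P} (h : PPar k V P x y)
    (hm : PMeets k V P x y) : x = y :=
  toAffineSubspace_injective (ext_of_direction_eq (ppar_iff.1 h).direction_eq (pmeets_iff.1 hm))

theorem pmeets_or_ppar (hV : finrank k V = 2) (x y : PLine k V P) :
    PMeets k V P x y ∨ PPar k V P x y := by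
  have := Module.finite_of_finrank_eq_succ hV
  rw [pmeets_iff, ppar_iff, or_comm]
  refine parallel_or_inter_nonempty_of_finrank_direction_add_one ?_ ?_ ?_ ?_
  · exact (coe_toAffineSubspace x).symm ▸ nonempty x
  · exact (coe_toAffineSubspace y).symm ▸ nonempty y
  · rw [finrank_direction, hV]
  · rw [finrank_direction, finrank_direction]

theorem _root_.PPar.pmeets_iff_pmeets (hV : finrank k V = 2) {a b x : PLine k V P}
    (h : PPar k V P a b) (hxa : x ≠ a) (hxb : x ≠ b) :
    PMeets k V P x a ↔ PMeets k V P x b := by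
  have key : ∀ {a b : PLine k V P}, PPar k V P a b → x ≠ b → PMeets k V P x b →
      PMeets k V P x a := fun hab hxb hm =>
    (pmeets_or_ppar hV x _).resolve_right fun hxa => hxb ((hxa.trans hab).eq_of_pmeets hm)
  exact ⟨key h.symm hxa, key h hxb⟩

theorem eq_of_mem_of_mem {x y : PLine k V P} (hxy : x ≠ y) {p q : P} (hpx : p ∈ x.1)
    (hqx : q ∈ x.1) (hpy : p ∈ y.1) (hqy : q ∈ y.1) : p = q := by
  by_contra hpq
  rw [← coe_toAffineSubspace] at hpx hqx hpy hqy
  exact hxy <| toAffineSubspace_injective <| eq_of_mem_of_mem_of_finrank_direction_eq_one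
    (finrank_direction x) (finrank_direction y) hpq hpx hqx hpy hqy

def through (p : P) {v : V} (hv : v ≠ 0) : PLine k V P :=
  ⟨mk' p (k ∙ v), p, v, hv, coe_mk'_span_singleton p v⟩

theorem mem_through (p : P) {v : V} (hv : v ≠ 0) : p ∈ (through (k := k) p hv).1 :=
  self_mem_mk' p _

theorem direction_through (p : P) {v : V} (hv : v ≠ 0) :
    (toAffineSubspace (through p hv)).direction = k ∙ v := by
  rw [toAffineSubspace, through, affineSpan_coe, direction_mk']

theorem exists_two_through_ne (hV : 1 < finrank k V) (a : PLine k V P) (p : P) :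
    ∃ m m' : PLine k V P, p ∈ m.1 ∧ p ∈ m'.1 ∧ m ≠ a ∧ m' ≠ a ∧ m ≠ m' := by
  obtain ⟨u, hu, ha⟩ := exists_direction_eq_span_singleton a
  obtain ⟨w, w', huw, huw', hww'⟩ := exists_linearIndependent_pairs_of_one_lt_finrank hV hu
  have hne : ∀ {x : V} (hx : x ≠ 0) (l : PLine k V P), k ∙ x ≠ (toAffineSubspace l).direction →
      through p hx ≠ l := fun hx l hxl h => hxl (by rw [← h, direction_through])
  refine ⟨through p (huw.ne_zero 1), through p (huw'.ne_zero 1), mem_through _ _, mem_through _ _,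
    hne _ _ ?_, hne _ _ ?_, hne _ _ ?_⟩
  · exact ha ▸ (span_singleton_ne_of_linearIndependent huw).symm
  · exact ha ▸ (span_singleton_ne_of_linearIndependent huw').symm
  · exact (direction_through (k := k) p _).symm ▸ span_singleton_ne_of_linearIndependent hww'

end PLine

end

open scoped Classical in
/-- In an affine plane, the transposition of two distinct parallel lines is an
automorphism of the Plücker space of lines which is not induced by any collineation. -/
theorem stmt16 (hdim : Module.rank k V = 2) (a b : PLine k V P) (hab : a ≠ b)
    (hpar : PPar k V P a b) :
    (∀ x y : PLine k V P,
      PMeets k V P x y ↔ PMeets k V P (Equiv.swap a b x) (Equiv.swap a b y)) ∧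
    ¬ ∃ κ : P ≃ P,
        (∀ Q R S : P,
          Collinear k ({Q, R, S} : Set P) ↔ Collinear k ({κ Q, κ R, κ S} : Set P)) ∧
        ∀ (l : PLine k V P) (Q : P), Q ∈ l.1 → κ Q ∈ (Equiv.swap a b l).1 := by
  have hV : finrank k V = 2 := finrank_eq_of_rank_eq hdim
  refine ⟨Equiv.rel_iff_rel_swap_swap PLine.pmeets_refl (fun _ _ => PMeets.symm)
    fun x hxa hxb => hpar.pmeets_iff_pmeets hV hxa hxb, ?_⟩
  rintro ⟨κ, -, hκ⟩
  have hdisj : ¬ PMeets k V P a b := fun h => hab (hpar.eq_of_pmeets h)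
  obtain ⟨p, hp⟩ := PLine.nonempty a
  obtain ⟨m, m', hpm, hpm', hma, hm'a, hmm'⟩ :=
    PLine.exists_two_through_ne (by omega) a p
  have hb : ∀ l : PLine k V P, p ∈ l.1 → l ≠ b := fun l hl hlb => hdisj ⟨p, hp, hlb ▸ hl⟩
  have hκm : κ p ∈ m.1 := by
    simpa [Equiv.swap_apply_of_ne_of_ne hma (hb m hpm)] using hκ m p hpm
  have hκm' : κ p ∈ m'.1 := by
    simpa [Equiv.swap_apply_of_ne_of_ne hm'a (hb m' hpm')] using hκ m' p hpm'
  have hκb : κ p ∈ b.1 := by simpa using hκ a p hp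
  have hfix : κ p = p := PLine.eq_of_mem_of_mem hmm' hκm hpm hκm' hpm'
  exact hdisj ⟨p, hp, hfix ▸ hκb⟩
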